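/- Define ω : ℝ² → [0,1] by ω(x₁, x₂) = x₁ if x₂ = 0 and 0 < x₁ ≤ 1, and ω(x) = 1 otherwise, and define d(x,y) = inf_γ ∫_γ ω ds over all rectifiable curves γ joining x and y (length computed with respect to the weight ω and Euclidean arclength). Then d is a metric on ℝ² and the identity map (ℝ², Euclidean) → (ℝ², d) is a homeomorphism. Moreover, for t ∈ (0,1], the segment γ_t from (0,0) to (t,0) satisfies ℓ_d(γ_t) = t²/2 while its Euclidean length is t. -/

import Mathlib

open MeasureTheory

/-- The plane with the Euclidean metric. -/
abbrev Plane : Type := EuclideanSpace ℝ (Fin 2)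

/-- The weight `ω(x₁,x₂) = x₁` if `x₂ = 0` and `0 < x₁ ≤ 1`, and `ω = 1` otherwise. -/
noncomputable def omegaWt (x : Plane) : ℝ :=
  if x 1 = 0 ∧ 0 < x 0 ∧ x 0 ≤ 1 then x 0 else 1

/-- The `ω`-weighted length of a curve `γ : [0,1] → ℝ²`:
`∫_γ ω ds = ∫₀¹ ω(γ(t))·‖γ'(t)‖ dt`. -/
noncomputable def wlen (γ : ℝ → Plane) : ℝ :=
  ∫ t in (0:ℝ)..1, omegaWt (γ t) * ‖deriv γ t‖

/-- The weighted distance `d(x,y) = inf_γ ∫_γ ω ds` over rectifiable (Lipschitz)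
curves joining `x` and `y`. -/
noncomputable def wdist (x y : Plane) : ℝ :=
  sInf {l : ℝ | ∃ γ : ℝ → Plane, (∃ C : NNReal, LipschitzWith C γ) ∧
    γ 0 = x ∧ γ 1 = y ∧ l = wlen γ}

/-- The straight segment from `(0,0)` to `(t,0)`, parametrized on `[0,1]`. -/
noncomputable def seg (t : ℝ) : ℝ → Plane :=
  fun s => (WithLp.equiv 2 (Fin 2 → ℝ)).symm ![s * t, 0]



section aux
open Filter

lemma omega_nonneg (x : Plane) : 0 ≤ omegaWt x := by
  unfold omegaWt; split
  · exact le_of_lt (by tauto)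
  · norm_num

lemma omega_le_one (x : Plane) : omegaWt x ≤ 1 := by
  unfold omegaWt; split
  · tauto
  · exact le_refl 1

lemma measurable_omega : Measurable omegaWt := by
  unfold omegaWt
  have h1 : Measurable fun x : Plane => x 1 := ((continuous_apply 1).comp (PiLp.continuous_ofLp 2 _)).measurable
  have h0 : Measurable fun x : Plane => x 0 := ((continuous_apply 0).comp (PiLp.continuous_ofLp 2 _)).measurable
  refine Measurable.ite ?_ h0 measurable_const
  exact (h1 (measurableSet_singleton 0)).inter ((h0 measurableSet_Ioc))

noncomputable def fpot (u : ℝ) : ℝ := ∫ s in (0:ℝ)..u, min |s| 1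

lemma cont_min : Continuous fun s : ℝ => min |s| 1 :=
  (continuous_abs).min continuous_const

lemma min_nonneg' (s : ℝ) : 0 ≤ min |s| 1 := le_min (abs_nonneg s) one_pos.le

lemma intInt_min (a b : ℝ) : IntervalIntegrable (fun s => min |s| 1) volume a b :=
  (cont_min).intervalIntegrable a b

lemma fpot_hasDerivAt (u : ℝ) : HasDerivAt fpot (min |u| 1) u :=
  intervalIntegral.integral_hasDerivAt_right (intInt_min 0 u)
    (cont_min.stronglyMeasurableAtFilter _ _) cont_min.continuousAt

lemma fpot_sub (a b : ℝ) : fpot b - fpot a = ∫ s in a..b, min |s| 1 :=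
  intervalIntegral.integral_interval_sub_left (intInt_min 0 b) (intInt_min 0 a)

lemma fpot_lip (a b : ℝ) : |fpot b - fpot a| ≤ |b - a| := by
  rw [fpot_sub]
  calc |∫ s in a..b, min |s| 1| ≤ 1 * |b - a| := by
        rw [← Real.norm_eq_abs (∫ s in a..b, min |s| 1)]
        apply intervalIntegral.norm_integral_le_of_norm_le_const
        intro x _
        rw [Real.norm_eq_abs, abs_of_nonneg (min_nonneg' x)]
        exact min_le_right _ _
    _ = |b - a| := one_mul _

lemma fpot_strictMono : StrictMono fpot := by
  have key : ∀ a b : ℝ, a < b → 0 ≤ a → fpot a < fpot b := by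
    intro a b hab ha
    have : 0 < ∫ s in a..b, min |s| 1 := by
      apply intervalIntegral.intervalIntegral_pos_of_pos_on (intInt_min a b) _ hab
      intro x hx
      have : 0 < x := lt_of_le_of_lt ha hx.1
      rw [lt_min_iff, abs_of_pos this]
      exact ⟨this, one_pos⟩
    linarith [fpot_sub a b]
  have keyneg : ∀ a b : ℝ, a < b → b ≤ 0 → fpot a < fpot b := by
    intro a b hab hb
    have : 0 < ∫ s in a..b, min |s| 1 := by
      apply intervalIntegral.intervalIntegral_pos_of_pos_on (intInt_min a b) _ hab
      intro x hx
      have : x < 0 := lt_of_lt_of_le hx.2 hb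
      rw [lt_min_iff, abs_of_neg this]
      exact ⟨by linarith, one_pos⟩
    linarith [fpot_sub a b]
  intro a b hab
  rcases le_or_gt 0 a with ha | ha
  · exact key a b hab ha
  rcases le_or_gt b 0 with hb | hb
  · exact keyneg a b hab hb
  · exact (keyneg a 0 ha le_rfl).trans (key 0 b hb le_rfl)

lemma min_le_omega (p : Plane) (i : Fin 2) : min |p i| 1 ≤ omegaWt p := by
  unfold omegaWt
  by_cases h : p 1 = 0 ∧ 0 < p 0 ∧ p 0 ≤ 1
  · rw [if_pos h]
    fin_cases i
    · simpa [abs_of_pos h.2.1] using min_le_left |p 0| (1:ℝ)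
    · show |p 1| ⊓ 1 ≤ p 0
      rw [h.1]; simpa using le_of_lt h.2.1
  · rw [if_neg h]; exact min_le_right _ _

lemma intInt_of_bounded {f : ℝ → ℝ} (hm : Measurable f) {C : ℝ} (hb : ∀ t, |f t| ≤ C)
    (a b : ℝ) : IntervalIntegrable f volume a b := by
  rw [intervalIntegrable_iff]
  haveI : IsFiniteMeasure (volume.restrict (Set.uIoc a b)) := by
    constructor
    rw [Measure.restrict_apply_univ, Set.uIoc, Real.volume_Ioc]
    exact ENNReal.ofReal_lt_top
  apply Integrable.mono' (g := fun _ => C) (integrable_const C)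
    hm.aestronglyMeasurable.restrict
  exact ae_of_all _ fun t => hb t

lemma lip_deriv_bound {C : NNReal} {E : Type*} [NormedAddCommGroup E] [NormedSpace ℝ E]
    {h : ℝ → E} (hl : LipschitzWith C h) (t : ℝ) : ‖deriv h t‖ ≤ C := by
  by_cases hd : DifferentiableAt ℝ h t
  · have h1 : ‖fderiv ℝ h t‖ ≤ C := hd.hasFDerivAt.le_of_lipschitz hl
    rw [← fderiv_apply_one_eq_deriv]
    calc ‖fderiv ℝ h t 1‖ ≤ ‖fderiv ℝ h t‖ * ‖(1:ℝ)‖ := (fderiv ℝ h t).le_opNorm 1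
      _ ≤ C := by simpa using h1
  · rw [deriv_zero_of_not_differentiableAt hd]; simp

lemma lip_ftc {C : NNReal} {h : ℝ → ℝ} (hl : LipschitzWith C h) :
    h 1 - h 0 = ∫ t in (0:ℝ)..1, deriv h t := by
  have hc : Continuous h := hl.continuous
  set δ : ℕ → ℝ := fun n => ((n : ℝ) + 1)⁻¹ with hδ
  have hδpos : ∀ n, 0 < δ n := fun n => by positivity
  have hδ0 : Tendsto δ atTop (nhds 0) := by
    apply Tendsto.inv_tendsto_atTop
    exact tendsto_atTop_add_const_right _ 1 tendsto_natCast_atTop_atTop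
  set F : ℕ → ℝ → ℝ := fun n t => (δ n)⁻¹ * (h (t + δ n) - h t) with hF
  -- slope convergence at any point b for any Lipschitz-type function
  have slope_conv : ∀ (g : ℝ → ℝ) (b L : ℝ), HasDerivAt g L b →
      Tendsto (fun n => (δ n)⁻¹ * (g (b + δ n) - g b)) atTop (nhds L) := by
    intro g b L hg
    have h1 : Tendsto (fun n => b + δ n) atTop (nhdsWithin b {b}ᶜ) := by
      apply tendsto_nhdsWithin_of_tendsto_nhds_of_eventually_within
      · simpa using tendsto_const_nhds.add hδ0
      · exact Eventually.of_forall fun n => by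
          simp only [Set.mem_compl_iff, Set.mem_singleton_iff]
          exact fun hh => (hδpos n).ne' (by linarith)
    have h2 := (hasDerivAt_iff_tendsto_slope.1 hg).comp h1
    convert h2 using 2 with n
    simp only [Function.comp_apply]
    rw [slope_def_field]
    have hb' : b + δ n - b = δ n := by ring
    rw [hb', div_eq_inv_mul]
  -- a.e. convergence of F to deriv h
  have ae_conv : ∀ᵐ t ∂(volume : Measure ℝ), Tendsto (fun n => F n t) atTop (nhds (deriv h t)) := by
    filter_upwards [hl.ae_differentiableAt] with t ht
    exact slope_conv h t (deriv h t) ht.hasDerivAt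
  -- uniform bound
  have Fbound : ∀ n t, |F n t| ≤ C := by
    intro n t
    rw [hF, abs_mul, abs_inv, abs_of_pos (hδpos n)]
    rw [inv_mul_le_iff₀ (hδpos n)]
    have := hl.dist_le_mul (t + δ n) t
    rw [Real.dist_eq, Real.dist_eq] at this
    simpa [abs_of_pos (hδpos n), mul_comm] using this
  -- integral of F n
  have hint : ∀ n, ∫ t in (0:ℝ)..1, F n t
      = (δ n)⁻¹ * ((∫ t in (1:ℝ)..(1 + δ n), h t) - ∫ t in (0:ℝ)..(0 + δ n), h t) := by
    intro n
    rw [intervalIntegral.integral_const_mul]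
    congr 1
    have ic : Continuous fun t => h (t + δ n) := hc.comp (continuous_id.add continuous_const)
    rw [intervalIntegral.integral_sub (ic.intervalIntegrable _ _)
      (hc.intervalIntegrable _ _)]
    have comp : ∫ t in (0:ℝ)..1, h (t + δ n) = ∫ t in (0 + δ n)..(1 + δ n), h t :=
      intervalIntegral.integral_comp_add_right h (δ n)
    rw [comp]
    have e1 : ∫ t in (0 + δ n)..(1 + δ n), h t =
        (∫ t in (0 + δ n)..(1:ℝ), h t) + ∫ t in (1:ℝ)..(1 + δ n), h t :=
      (intervalIntegral.integral_add_adjacent_intervals (hc.intervalIntegrable _ _)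
        (hc.intervalIntegrable _ _)).symm
    have e2 : ∫ t in (0:ℝ)..1, h t =
        (∫ t in (0:ℝ)..(0 + δ n), h t) + ∫ t in (0 + δ n)..(1:ℝ), h t :=
      (intervalIntegral.integral_add_adjacent_intervals (hc.intervalIntegrable _ _)
        (hc.intervalIntegrable _ _)).symm
    rw [e1, e2]; ring
  -- limit of integrals is h 1 - h 0
  have lim1 : Tendsto (fun n => ∫ t in (0:ℝ)..1, F n t) atTop (nhds (h 1 - h 0)) := by
    simp only [hint]
    have d1 : HasDerivAt (fun u => ∫ t in (0:ℝ)..u, h t) (h 1) 1 :=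
      intervalIntegral.integral_hasDerivAt_right (hc.intervalIntegrable _ _)
        (hc.stronglyMeasurableAtFilter _ _) hc.continuousAt
    have d0 : HasDerivAt (fun u => ∫ t in (0:ℝ)..u, h t) (h 0) 0 :=
      intervalIntegral.integral_hasDerivAt_right (hc.intervalIntegrable _ _)
        (hc.stronglyMeasurableAtFilter _ _) hc.continuousAt
    have t1 := slope_conv _ _ _ d1
    have t0 := slope_conv _ _ _ d0
    have comb := t1.sub t0
    have : ∀ n, (δ n)⁻¹ * ((fun u => ∫ t in (0:ℝ)..u, h t) (1 + δ n) - (fun u => ∫ t in (0:ℝ)..u, h t) 1)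
        - (δ n)⁻¹ * ((fun u => ∫ t in (0:ℝ)..u, h t) (0 + δ n) - (fun u => ∫ t in (0:ℝ)..u, h t) 0)
        = (δ n)⁻¹ * ((∫ t in (1:ℝ)..(1 + δ n), h t) - ∫ t in (0:ℝ)..(0 + δ n), h t) := by
      intro n
      have a1 : (∫ t in (0:ℝ)..(1 + δ n), h t) - (∫ t in (0:ℝ)..(1:ℝ), h t)
          = ∫ t in (1:ℝ)..(1 + δ n), h t :=
        intervalIntegral.integral_interval_sub_left (hc.intervalIntegrable _ _)
          (hc.intervalIntegrable _ _)
      have a0 : (∫ t in (0:ℝ)..(0 + δ n), h t) - (∫ t in (0:ℝ)..(0:ℝ), h t)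
          = ∫ t in (0:ℝ)..(0 + δ n), h t := by
        rw [intervalIntegral.integral_same]; ring
      simp only [] at a1 a0 ⊢
      rw [← a1]
      rw [intervalIntegral.integral_same]
      ring
    simp only [this] at comb
    simpa using comb
  -- DCT
  have lim2 : Tendsto (fun n => ∫ t in (0:ℝ)..1, F n t) atTop (nhds (∫ t in (0:ℝ)..1, deriv h t)) := by
    apply intervalIntegral.tendsto_integral_filter_of_dominated_convergence (fun _ => (C:ℝ))
    · refine Eventually.of_forall fun n => Continuous.aestronglyMeasurable ?_
      exact continuous_const.mul ((hc.comp (continuous_id.add continuous_const)).sub hc)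
    · exact Eventually.of_forall fun n => ae_of_all _ fun t _ => by
        rw [Real.norm_eq_abs]; exact Fbound n t
    · exact intervalIntegrable_const
    · filter_upwards [ae_conv] with t ht
      exact fun _ => ht
  exact tendsto_nhds_unique lim1 lim2

lemma coord_le_norm (v : Plane) (i : Fin 2) : |v i| ≤ ‖v‖ := by
  rw [EuclideanSpace.norm_eq]
  rw [← Real.sqrt_sq_eq_abs]
  apply Real.sqrt_le_sqrt
  have : ∀ j ∈ Finset.univ, (0:ℝ) ≤ ‖v j‖^2 := fun j _ => sq_nonneg _
  have h2 := Finset.single_le_sum this (Finset.mem_univ i)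
  simpa [sq_abs] using h2

lemma coord_dist_le (x y : Plane) (i : Fin 2) : |x i - y i| ≤ dist x y := by
  rw [dist_eq_norm]
  have : (x - y) i = x i - y i := rfl
  rw [← this]
  exact coord_le_norm _ i


lemma wlen_integrand_meas {γ : ℝ → Plane} (hc : Continuous γ) :
    Measurable fun t => omegaWt (γ t) * ‖deriv γ t‖ :=
  (measurable_omega.comp hc.measurable).mul (measurable_deriv γ).norm

lemma wlen_integrand_bound {C : NNReal} {γ : ℝ → Plane} (hγ : LipschitzWith C γ) (t : ℝ) :
    |omegaWt (γ t) * ‖deriv γ t‖| ≤ C := by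
  rw [abs_mul, abs_of_nonneg (omega_nonneg _), abs_of_nonneg (norm_nonneg _)]
  calc omegaWt (γ t) * ‖deriv γ t‖ ≤ 1 * (C:ℝ) :=
        mul_le_mul (omega_le_one _) (lip_deriv_bound hγ t) (norm_nonneg _) one_pos.le
    _ = C := one_mul _

lemma wlen_intInt {C : NNReal} {γ : ℝ → Plane} (hγ : LipschitzWith C γ) (a b : ℝ) :
    IntervalIntegrable (fun t => omegaWt (γ t) * ‖deriv γ t‖) volume a b :=
  intInt_of_bounded (wlen_integrand_meas hγ.continuous) (wlen_integrand_bound hγ) a b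

lemma wlen_nonneg (γ : ℝ → Plane) : 0 ≤ wlen γ :=
  intervalIntegral.integral_nonneg (by norm_num)
    fun u _ => mul_nonneg (omega_nonneg _) (norm_nonneg _)

lemma key_lower {C : NNReal} {γ : ℝ → Plane} (hγ : LipschitzWith C γ) (i : Fin 2) :
    |fpot (γ 1 i) - fpot (γ 0 i)| ≤ wlen γ := by
  set h : ℝ → ℝ := fun t => fpot (γ t i) with hh
  have hlip : LipschitzWith C h := LipschitzWith.of_dist_le_mul fun a b => by
    rw [Real.dist_eq]
    calc |fpot (γ a i) - fpot (γ b i)| ≤ |γ a i - γ b i| := fpot_lip _ _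
      _ ≤ dist (γ a) (γ b) := coord_dist_le _ _ i
      _ ≤ C * dist a b := hγ.dist_le_mul a b
  have habs : ∀ᵐ t ∂(volume : Measure ℝ),
      |deriv h t| ≤ omegaWt (γ t) * ‖deriv γ t‖ := by
    filter_upwards [hγ.ae_differentiableAt] with t ht
    have h1 : HasDerivAt (fun s => γ s i) (deriv γ t i) t :=
      (EuclideanSpace.proj (𝕜 := ℝ) i).hasFDerivAt.comp_hasDerivAt t ht.hasDerivAt
    have h2 : HasDerivAt h (min |γ t i| 1 * (deriv γ t i)) t :=
      (fpot_hasDerivAt _).comp t h1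
    rw [h2.deriv, abs_mul, abs_of_nonneg (min_nonneg' _)]
    exact mul_le_mul (min_le_omega _ i) (coord_le_norm _ i) (abs_nonneg _) (omega_nonneg _)
  have habs_meas : Measurable fun t => |deriv h t| := (measurable_deriv h).abs
  have habs_bdd : ∀ t, |(|deriv h t|)| ≤ (C:ℝ) := fun t => by
    rw [abs_abs]; exact lip_deriv_bound hlip t
  have step : |h 1 - h 0| ≤ wlen γ := by
    rw [lip_ftc hlip]
    calc |∫ t in (0:ℝ)..1, deriv h t| ≤ ∫ t in (0:ℝ)..1, |deriv h t| :=
          intervalIntegral.abs_integral_le_integral_abs (by norm_num)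
      _ ≤ wlen γ := by
          apply intervalIntegral.integral_mono_ae (by norm_num)
            (intInt_of_bounded habs_meas habs_bdd 0 1) (wlen_intInt hγ 0 1)
          exact habs
  exact step

def curveSet (x y : Plane) : Set ℝ :=
  {l : ℝ | ∃ γ : ℝ → Plane, (∃ C : NNReal, LipschitzWith C γ) ∧
    γ 0 = x ∧ γ 1 = y ∧ l = wlen γ}

lemma wdist_eq (x y : Plane) : wdist x y = sInf (curveSet x y) := rfl

lemma curveSet_bddBelow (x y : Plane) : BddBelow (curveSet x y) :=
  ⟨0, fun l ⟨γ, _, _, _, hl⟩ => hl ▸ wlen_nonneg γ⟩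

noncomputable def lineCurve (x y : Plane) : ℝ → Plane := fun s => x + s • (y - x)

lemma lineCurve_lip (x y : Plane) : LipschitzWith ‖y - x‖₊ (lineCurve x y) := by
  apply LipschitzWith.of_dist_le_mul
  intro a b
  unfold lineCurve
  rw [dist_add_left, dist_eq_norm, ← sub_smul, norm_smul]
  rw [Real.dist_eq]
  simp [coe_nnnorm, mul_comm]

lemma lineCurve_deriv (x y : Plane) (s : ℝ) : deriv (lineCurve x y) s = y - x := by
  have : HasDerivAt (lineCurve x y) ((1:ℝ) • (y - x)) s :=
    ((hasDerivAt_id s).smul_const (y - x)).const_add x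
  rw [this.deriv, one_smul]

lemma wlen_lineCurve_le (x y : Plane) : wlen (lineCurve x y) ≤ dist x y := by
  unfold wlen
  have heq : ∀ t : ℝ, omegaWt (lineCurve x y t) * ‖deriv (lineCurve x y) t‖
      ≤ ‖y - x‖ := fun t => by
    rw [lineCurve_deriv]
    calc omegaWt (lineCurve x y t) * ‖y - x‖ ≤ 1 * ‖y - x‖ :=
          mul_le_mul_of_nonneg_right (omega_le_one _) (norm_nonneg _)
      _ = ‖y - x‖ := one_mul _
  calc (∫ t in (0:ℝ)..1, omegaWt (lineCurve x y t) * ‖deriv (lineCurve x y) t‖)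
      ≤ ∫ _ in (0:ℝ)..1, ‖y - x‖ := by
        apply intervalIntegral.integral_mono_on (by norm_num)
          (wlen_intInt (lineCurve_lip x y) 0 1) intervalIntegrable_const
        exact fun t _ => heq t
    _ = ‖y - x‖ := by simp
    _ = dist x y := (dist_eq_norm' x y).symm

lemma wlen_lineCurve_mem (x y : Plane) : wlen (lineCurve x y) ∈ curveSet x y := by
  refine ⟨lineCurve x y, ⟨_, lineCurve_lip x y⟩, by simp [lineCurve], by simp [lineCurve], rfl⟩

lemma curveSet_nonempty (x y : Plane) : (curveSet x y).Nonempty :=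
  ⟨_, wlen_lineCurve_mem x y⟩

lemma wdist_le_dist (x y : Plane) : wdist x y ≤ dist x y :=
  (csInf_le (curveSet_bddBelow x y) (wlen_lineCurve_mem x y)).trans (wlen_lineCurve_le x y)

lemma wdist_nonneg (x y : Plane) : 0 ≤ wdist x y :=
  le_csInf (curveSet_nonempty x y) fun l ⟨γ, _, _, _, hl⟩ => hl ▸ wlen_nonneg γ

lemma fpot_le_wdist (x y : Plane) (i : Fin 2) : |fpot (y i) - fpot (x i)| ≤ wdist x y := by
  apply le_csInf (curveSet_nonempty x y)
  rintro l ⟨γ, ⟨C, hγ⟩, h0, h1, rfl⟩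
  have := key_lower hγ i
  rw [h0, h1] at this
  exact this

lemma wdist_eq_zero_iff (x y : Plane) : wdist x y = 0 ↔ x = y := by
  constructor
  · intro h
    by_contra hne
    have : ∃ i, x i ≠ y i := by
      by_contra hc
      push_neg at hc
      exact hne (WithLp.ofLp_injective _ (funext hc))
    obtain ⟨i, hi⟩ := this
    have hpos : 0 < |fpot (y i) - fpot (x i)| := by
      rw [abs_pos, sub_ne_zero]
      exact fun hfe => hi (fpot_strictMono.injective hfe).symm
    linarith [fpot_le_wdist x y i]
  · rintro rfl
    have h1 := wdist_le_dist x x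
    rw [dist_self] at h1
    exact le_antisymm h1 (wdist_nonneg x x)

lemma deriv_comp_affine (γ : ℝ → Plane) {c : ℝ} (hc : c ≠ 0) (b t : ℝ) :
    deriv (fun s => γ (c * s + b)) t = c • deriv γ (c * t + b) := by
  have haff : HasDerivAt (fun s : ℝ => c * s + b) c t := by
    simpa using ((hasDerivAt_id t).const_mul c).add_const b
  by_cases hd : DifferentiableAt ℝ γ (c * t + b)
  · exact (HasDerivAt.scomp t hd.hasDerivAt haff).deriv
  · have hnd : ¬ DifferentiableAt ℝ (fun s => γ (c * s + b)) t := by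
      intro hD
      apply hd
      have hγeq : γ = (fun s => γ (c * s + b)) ∘ (fun u => (u - b) / c) := by
        funext u
        simp only [Function.comp_apply]
        congr 1
        field_simp
        ring
      rw [hγeq]
      apply DifferentiableAt.comp
      · have : (c * t + b - b) / c = t := by field_simp; ring
        rw [this]
        exact hD
      · exact (differentiable_id.sub_const b).div_const c |>.differentiableAt
    rw [deriv_zero_of_not_differentiableAt hnd, deriv_zero_of_not_differentiableAt hd,
      smul_zero]

lemma wlen_reverse (γ : ℝ → Plane) : wlen (fun t => γ (1 - t)) = wlen γ := by
  have hfun : (fun t : ℝ => γ (1 - t)) = fun t => γ ((-1) * t + 1) := by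
    funext t; ring_nf
  rw [wlen]
  have key : (∫ t in (0:ℝ)..1, omegaWt ((fun t => γ (1 - t)) t) * ‖deriv (fun t => γ (1 - t)) t‖)
      = ∫ t in (0:ℝ)..1, (fun s => omegaWt (γ s) * ‖deriv γ s‖) (1 - t) := by
    apply intervalIntegral.integral_congr
    intro t _
    simp only []
    have hder : ‖deriv (fun t => γ (1 - t)) t‖ = ‖deriv γ (1 - t)‖ := by
      rw [hfun, deriv_comp_affine γ (by norm_num) 1 t, norm_smul]
      have h1 : (-1) * t + 1 = 1 - t := by ring
      rw [h1]; simp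
    rw [hder]
  rw [key, intervalIntegral.integral_comp_sub_left (fun s => omegaWt (γ s) * ‖deriv γ s‖) 1]
  norm_num [wlen]

lemma curveSet_symm_subset (x y : Plane) : curveSet x y ⊆ curveSet y x := by
  rintro l ⟨γ, ⟨C, hγ⟩, h0, h1, rfl⟩
  refine ⟨fun t => γ (1 - t), ⟨C * 1, hγ.comp (LipschitzWith.of_dist_le_mul fun a b => by
      rw [Real.dist_eq, Real.dist_eq]
      have : (1:ℝ) - a - (1 - b) = -(a - b) := by ring
      rw [this, abs_neg, NNReal.coe_one, one_mul])⟩,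
    by simpa using h1, by simpa using h0, (wlen_reverse γ).symm⟩

lemma wdist_symm (x y : Plane) : wdist x y = wdist y x := by
  rw [wdist_eq, wdist_eq,
    le_antisymm (curveSet_symm_subset x y) (curveSet_symm_subset y x)]

noncomputable def concat (γ₁ γ₂ : ℝ → Plane) : ℝ → Plane :=
  fun t => if t ≤ 1/2 then γ₁ (2*t) else γ₂ (2*t - 1)

lemma concat_lip {C₁ C₂ : NNReal} {γ₁ γ₂ : ℝ → Plane} (h1 : LipschitzWith C₁ γ₁)
    (h2 : LipschitzWith C₂ γ₂) (hmid : γ₁ 1 = γ₂ 0) :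
    LipschitzWith (2*C₁ + 2*C₂) (concat γ₁ γ₂) := by
  apply LipschitzWith.of_dist_le_mul
  have coeK : ((2*C₁ + 2*C₂ : NNReal) : ℝ) = 2*(C₁:ℝ) + 2*(C₂:ℝ) := by push_cast; ring
  have key : ∀ s t : ℝ, s ≤ t →
      dist (concat γ₁ γ₂ s) (concat γ₁ γ₂ t) ≤ (2*(C₁:ℝ) + 2*(C₂:ℝ)) * (t - s) := by
    intro s t hst
    have hC₁ : (0:ℝ) ≤ C₁ := C₁.coe_nonneg
    have hC₂ : (0:ℝ) ≤ C₂ := C₂.coe_nonneg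
    by_cases ht : t ≤ 1/2
    · have hs : s ≤ 1/2 := hst.trans ht
      simp only [concat, if_pos hs, if_pos ht]
      calc dist (γ₁ (2*s)) (γ₁ (2*t)) ≤ C₁ * dist (2*s) (2*t) := h1.dist_le_mul _ _
        _ = C₁ * (2*(t-s)) := by rw [Real.dist_eq]; rw [abs_of_nonpos (by linarith)]; ring
        _ ≤ (2*(C₁:ℝ) + 2*(C₂:ℝ)) * (t - s) := by nlinarith
    · by_cases hs : s ≤ 1/2
      · -- cross case
        simp only [concat, if_pos hs, if_neg ht]
        push_neg at ht
        calc dist (γ₁ (2*s)) (γ₂ (2*t-1))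
            ≤ dist (γ₁ (2*s)) (γ₁ 1) + dist (γ₂ 0) (γ₂ (2*t-1)) := by
              rw [hmid]; exact dist_triangle _ _ _
          _ ≤ C₁ * dist (2*s) 1 + C₂ * dist 0 (2*t-1) :=
              add_le_add (h1.dist_le_mul _ _) (h2.dist_le_mul _ _)
          _ ≤ C₁ * (2*(t-s)) + C₂ * (2*(t-s)) := by
              apply add_le_add
              · apply mul_le_mul_of_nonneg_left _ hC₁
                rw [Real.dist_eq, abs_of_nonpos (by linarith)]
                linarith
              · apply mul_le_mul_of_nonneg_left _ hC₂
                rw [Real.dist_eq, abs_of_nonpos (by linarith)]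
                linarith
          _ = (2*(C₁:ℝ) + 2*(C₂:ℝ)) * (t - s) := by ring
      · push_neg at hs
        simp only [concat, if_neg (not_le.2 hs), if_neg ht]
        calc dist (γ₂ (2*s-1)) (γ₂ (2*t-1)) ≤ C₂ * dist (2*s-1) (2*t-1) := h2.dist_le_mul _ _
          _ = C₂ * (2*(t-s)) := by rw [Real.dist_eq, abs_of_nonpos (by linarith)]; ring
          _ ≤ (2*(C₁:ℝ) + 2*(C₂:ℝ)) * (t - s) := by nlinarith
  intro s t
  rw [coeK]
  rcases le_total s t with h | h
  · calc dist (concat γ₁ γ₂ s) (concat γ₁ γ₂ t) ≤ (2*(C₁:ℝ) + 2*(C₂:ℝ)) * (t - s) := key s t h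
      _ = (2*(C₁:ℝ) + 2*(C₂:ℝ)) * dist s t := by
          rw [Real.dist_eq, abs_of_nonpos (by linarith)]
          try ring
  · rw [dist_comm]
    calc dist (concat γ₁ γ₂ t) (concat γ₁ γ₂ s) ≤ (2*(C₁:ℝ) + 2*(C₂:ℝ)) * (s - t) := key t s h
      _ = (2*(C₁:ℝ) + 2*(C₂:ℝ)) * dist s t := by
          rw [Real.dist_eq, abs_of_nonneg (by linarith)]
          try ring

lemma wlen_concat {C₁ C₂ : NNReal} {γ₁ γ₂ : ℝ → Plane} (h1 : LipschitzWith C₁ γ₁)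
    (h2 : LipschitzWith C₂ γ₂) (hmid : γ₁ 1 = γ₂ 0) :
    wlen (concat γ₁ γ₂) = wlen γ₁ + wlen γ₂ := by
  have hK := concat_lip h1 h2 hmid
  have split : wlen (concat γ₁ γ₂)
      = (∫ t in (0:ℝ)..(1/2), omegaWt (concat γ₁ γ₂ t) * ‖deriv (concat γ₁ γ₂) t‖)
        + ∫ t in (1/2:ℝ)..1, omegaWt (concat γ₁ γ₂ t) * ‖deriv (concat γ₁ γ₂) t‖ := by
    rw [wlen]
    exact (intervalIntegral.integral_add_adjacent_intervals
      (wlen_intInt hK 0 (1/2)) (wlen_intInt hK (1/2) 1)).symm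
  have left_eq : (∫ t in (0:ℝ)..(1/2), omegaWt (concat γ₁ γ₂ t) * ‖deriv (concat γ₁ γ₂) t‖)
      = wlen γ₁ := by
    have hae : ∀ᵐ t ∂(volume : Measure ℝ), t ≠ 1/2 := by
      rw [ae_iff]
      have : {t : ℝ | ¬ t ≠ 1/2} = {1/2} := by ext u; simp
      rw [this]
      exact Real.volume_singleton
    have hcong : ∀ᵐ t ∂(volume : Measure ℝ), t ∈ Set.uIoc (0:ℝ) (1/2) →
        omegaWt (concat γ₁ γ₂ t) * ‖deriv (concat γ₁ γ₂) t‖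
        = 2 * ((fun s => omegaWt (γ₁ s) * ‖deriv γ₁ s‖) (2*t)) := by
      filter_upwards [hae] with t hne hmem
      rw [Set.uIoc_of_le (by norm_num : (0:ℝ) ≤ 1/2)] at hmem
      have htlt : t < 1/2 := lt_of_le_of_ne hmem.2 hne
      have heq : concat γ₁ γ₂ =ᶠ[nhds t] (fun s => γ₁ (2*s + 0)) := by
        filter_upwards [Iio_mem_nhds htlt] with s hs
        have hs' : s ≤ 1/2 := le_of_lt (Set.mem_Iio.1 hs)
        simp only [concat, if_pos hs', add_zero]
      have hval : concat γ₁ γ₂ t = γ₁ (2*t) := by simp only [concat, if_pos (le_of_lt htlt)]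
      rw [hval, heq.deriv_eq, deriv_comp_affine γ₁ two_ne_zero 0 t]
      simp only [add_zero]
      rw [norm_smul]
      simp only [Real.norm_ofNat]
      ring
    have hcl := intervalIntegral.integral_comp_mul_left
      (f := fun s => omegaWt (γ₁ s) * ‖deriv γ₁ s‖) (a := 0) (b := 1/2) two_ne_zero
    rw [intervalIntegral.integral_congr_ae hcong,
      intervalIntegral.integral_const_mul, hcl]
    rw [wlen]
    norm_num [smul_eq_mul]
    ring
  have right_eq : (∫ t in (1/2:ℝ)..1, omegaWt (concat γ₁ γ₂ t) * ‖deriv (concat γ₁ γ₂) t‖)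
      = wlen γ₂ := by
    have hcong : ∀ᵐ t ∂(volume : Measure ℝ), t ∈ Set.uIoc (1/2:ℝ) 1 →
        omegaWt (concat γ₁ γ₂ t) * ‖deriv (concat γ₁ γ₂) t‖
        = 2 * ((fun s => omegaWt (γ₂ s) * ‖deriv γ₂ s‖) (2*t - 1)) := by
      apply ae_of_all
      intro t hmem
      rw [Set.uIoc_of_le (by norm_num : (1/2:ℝ) ≤ 1)] at hmem
      have htgt : 1/2 < t := hmem.1
      have heq : concat γ₁ γ₂ =ᶠ[nhds t] (fun s => γ₂ (2*s + (-1))) := by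
        filter_upwards [Ioi_mem_nhds htgt] with s hs
        have hsgt : ¬ s ≤ 1/2 := not_le.2 (Set.mem_Ioi.1 hs)
        simp only [concat, if_neg hsgt]
        have : 2*s - 1 = 2*s + (-1) := by ring
        rw [this]
      have hval : concat γ₁ γ₂ t = γ₂ (2*t - 1) := by
        simp only [concat, if_neg (not_le.2 htgt)]
      rw [hval, heq.deriv_eq, deriv_comp_affine γ₂ two_ne_zero (-1) t]
      have : 2*t + (-1) = 2*t - 1 := by ring
      rw [this, norm_smul]
      simp only [Real.norm_ofNat]
      ring
    have hcl := intervalIntegral.integral_comp_mul_sub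
      (f := fun s => omegaWt (γ₂ s) * ‖deriv γ₂ s‖) (a := 1/2) (b := 1) two_ne_zero 1
    rw [intervalIntegral.integral_congr_ae hcong,
      intervalIntegral.integral_const_mul, hcl]
    rw [wlen]
    norm_num [smul_eq_mul]
    ring
  rw [split, left_eq, right_eq]

lemma wdist_triangle (x y z : Plane) : wdist x z ≤ wdist x y + wdist y z := by
  apply le_of_forall_pos_le_add
  intro ε hε
  have hxy : sInf (curveSet x y) < wdist x y + ε/2 := by rw [← wdist_eq]; linarith
  have hyz : sInf (curveSet y z) < wdist y z + ε/2 := by rw [← wdist_eq]; linarith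
  obtain ⟨l₁, hmem₁, hlt₁⟩ := exists_lt_of_csInf_lt (curveSet_nonempty x y) hxy
  obtain ⟨l₂, hmem₂, hlt₂⟩ := exists_lt_of_csInf_lt (curveSet_nonempty y z) hyz
  obtain ⟨γ₁, ⟨C₁, h1⟩, a0, a1, rfl⟩ := hmem₁
  obtain ⟨γ₂, ⟨C₂, h2⟩, b0, b1, rfl⟩ := hmem₂
  have hmid : γ₁ 1 = γ₂ 0 := by rw [a1, b0]
  have hcon : wdist x z ≤ wlen (concat γ₁ γ₂) := by
    apply csInf_le (curveSet_bddBelow x z)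
    refine ⟨concat γ₁ γ₂, ⟨_, concat_lip h1 h2 hmid⟩, ?_, ?_, rfl⟩
    · have : concat γ₁ γ₂ 0 = γ₁ (2*0) := by norm_num [concat]
      rw [this]; norm_num [a0]
    · have : concat γ₁ γ₂ 1 = γ₂ (2*1 - 1) := by norm_num [concat]
      rw [this]; norm_num [b1]
  rw [wlen_concat h1 h2 hmid] at hcon
  linarith

lemma dist_le_coord (x y : Plane) : dist x y ≤ |x 0 - y 0| + |x 1 - y 1| := by
  rw [EuclideanSpace.dist_eq, Fin.sum_univ_two]
  have h0 : dist (x 0) (y 0) = |x 0 - y 0| := Real.dist_eq _ _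
  have h1 : dist (x 1) (y 1) = |x 1 - y 1| := Real.dist_eq _ _
  rw [h0, h1]
  set a := |x 0 - y 0|; set b := |x 1 - y 1|
  have ha : 0 ≤ a := abs_nonneg _
  have hb : 0 ≤ b := abs_nonneg _
  have : a^2 + b^2 ≤ (a+b)^2 := by nlinarith
  calc Real.sqrt (a^2 + b^2) ≤ Real.sqrt ((a+b)^2) := Real.sqrt_le_sqrt this
    _ = a + b := Real.sqrt_sq (by linarith)

lemma homeo_part (x : Plane) (ε : ℝ) (hε : 0 < ε) :
    ∃ δ : ℝ, 0 < δ ∧ ∀ y : Plane,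
      (dist x y < δ → wdist x y < ε) ∧ (wdist x y < δ → dist x y < ε) := by
  set ε' := ε/2 with hε'
  have hε'pos : 0 < ε' := by positivity
  have dpos : ∀ i : Fin 2, 0 < min (fpot (x i + ε') - fpot (x i)) (fpot (x i) - fpot (x i - ε')) := by
    intro i
    apply lt_min
    · have := fpot_strictMono (show x i < x i + ε' by linarith); linarith
    · have := fpot_strictMono (show x i - ε' < x i by linarith); linarith
  set d0 := min (fpot (x 0 + ε') - fpot (x 0)) (fpot (x 0) - fpot (x 0 - ε')) with hd0
  set d1 := min (fpot (x 1 + ε') - fpot (x 1)) (fpot (x 1) - fpot (x 1 - ε')) with hd1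
  have h0pos := dpos 0
  have h1pos := dpos 1
  rw [← hd0] at h0pos
  rw [← hd1] at h1pos
  refine ⟨min ε (min d0 d1), by positivity, ?_⟩
  intro y
  constructor
  · intro hlt
    have h1 : wdist x y ≤ dist x y := wdist_le_dist x y
    have h2 : min ε (min d0 d1) ≤ ε := min_le_left _ _
    linarith
  · intro hlt
    have key : ∀ i : Fin 2, |x i - y i| < ε' := by
      intro i
      have hb : |fpot (y i) - fpot (x i)| <
          min (fpot (x i + ε') - fpot (x i)) (fpot (x i) - fpot (x i - ε')) := by
        have hw := fpot_le_wdist x y i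
        have : min ε (min d0 d1) ≤ min (fpot (x i + ε') - fpot (x i)) (fpot (x i) - fpot (x i - ε')) := by
          fin_cases i
          · exact (min_le_right _ _).trans (min_le_left _ _)
          · exact (min_le_right _ _).trans (min_le_right _ _)
        linarith
      by_contra hcon
      push_neg at hcon
      rcases le_or_gt (x i + ε') (y i) with hy | hy
      · have := fpot_strictMono.monotone hy
        have habs : fpot (x i + ε') - fpot (x i) ≤ |fpot (y i) - fpot (x i)| := by
          rw [abs_sub_comm, abs_sub_lt_iff] at hb
          calc fpot (x i + ε') - fpot (x i) ≤ fpot (y i) - fpot (x i) := by linarith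
            _ ≤ |fpot (y i) - fpot (x i)| := le_abs_self _
        have := lt_of_le_of_lt habs hb
        exact absurd this (not_lt.2 (min_le_left _ _))
      rcases le_or_gt (y i) (x i - ε') with hy2 | hy2
      · have := fpot_strictMono.monotone hy2
        have habs : fpot (x i) - fpot (x i - ε') ≤ |fpot (y i) - fpot (x i)| := by
          calc fpot (x i) - fpot (x i - ε') ≤ fpot (x i) - fpot (y i) := by linarith
            _ ≤ |fpot (x i) - fpot (y i)| := le_abs_self _
            _ = |fpot (y i) - fpot (x i)| := abs_sub_comm _ _
        have := lt_of_le_of_lt habs hb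
        exact absurd this (not_lt.2 (min_le_right _ _))
      · apply absurd hcon
        push_neg
        rw [abs_sub_lt_iff]
        constructor <;> linarith
    have := dist_le_coord x y
    have k0 := key 0
    have k1 := key 1
    rw [hε'] at k0 k1
    linarith

section segment
variable {t : ℝ}

noncomputable def segv (t : ℝ) : Plane := (WithLp.equiv 2 (Fin 2 → ℝ)).symm ![t, 0]

lemma seg_eq_smul : seg t = fun s => s • segv t := by
  funext s
  unfold seg segv
  have : ![s * t, (0:ℝ)] = s • ![t, 0] := by
    rw [Matrix.smul_cons, Matrix.smul_cons, Matrix.smul_empty]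
    norm_num
  rw [this]
  rfl

lemma segv_apply0 : segv t 0 = t := rfl
lemma segv_apply1 : segv t 1 = 0 := rfl
lemma seg_apply0 (s : ℝ) : seg t s 0 = s * t := rfl
lemma seg_apply1 (s : ℝ) : seg t s 1 = 0 := rfl

lemma segv_norm (ht : 0 < t) : ‖segv t‖ = t := by
  rw [EuclideanSpace.norm_eq, Fin.sum_univ_two]
  rw [show segv t 0 = t from rfl, show segv t 1 = 0 from rfl]
  simp [Real.sqrt_sq ht.le, abs_of_pos ht]

lemma seg_deriv (s : ℝ) : deriv (seg t) s = segv t := by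
  rw [seg_eq_smul]
  have : HasDerivAt (fun s : ℝ => s • segv t) ((1:ℝ) • segv t) s :=
    (hasDerivAt_id s).smul_const (segv t)
  rw [this.deriv, one_smul]

lemma seg_wlen (ht : t ∈ Set.Ioc (0:ℝ) 1) : wlen (seg t) = t ^ 2 / 2 := by
  obtain ⟨ht0, ht1⟩ := ht
  rw [wlen]
  have hcong : ∀ᵐ s ∂(volume : Measure ℝ), s ∈ Set.uIoc (0:ℝ) 1 →
      omegaWt (seg t s) * ‖deriv (seg t) s‖ = s * (t * t) := by
    apply ae_of_all
    intro s hs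
    rw [Set.uIoc_of_le (by norm_num : (0:ℝ) ≤ 1)] at hs
    have hst : 0 < s * t := mul_pos hs.1 ht0
    have hst1 : s * t ≤ 1 := by
      calc s * t ≤ 1 * 1 := mul_le_mul hs.2 ht1 ht0.le one_pos.le
        _ = 1 := one_mul 1
    have homega : omegaWt (seg t s) = s * t := by
      rw [omegaWt, if_pos ⟨seg_apply1 s, by rw [seg_apply0]; exact hst, by rw [seg_apply0]; exact hst1⟩]
      exact seg_apply0 s
    rw [homega, seg_deriv, segv_norm ht0]
    ring
  rw [intervalIntegral.integral_congr_ae hcong, intervalIntegral.integral_mul_const, integral_id]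
  ring

lemma seg_evar (ht : t ∈ Set.Ioc (0:ℝ) 1) :
    eVariationOn (seg t) (Set.Icc 0 1) = ENNReal.ofReal t := by
  obtain ⟨ht0, _⟩ := ht
  apply le_antisymm
  · have hlip : LipschitzWith ‖segv t‖₊ (fun s : ℝ => s • segv t) := by
      apply LipschitzWith.of_dist_le_mul
      intro a b
      rw [dist_eq_norm, ← sub_smul, norm_smul, Real.dist_eq]
      simp [coe_nnnorm, mul_comm]
    have hmono : MonotoneOn (id : ℝ → ℝ) (Set.Icc 0 1) := fun a _ b _ hab => hab
    have hid : eVariationOn (id : ℝ → ℝ) (Set.Icc 0 1) ≤ ENNReal.ofReal 1 := by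
      have := hmono.eVariationOn_le (Set.left_mem_Icc.2 (by norm_num))
        (Set.right_mem_Icc.2 (by norm_num))
      simpa using this
    have hcomp := (hlip.lipschitzOnWith (s := Set.univ)).comp_eVariationOn_le
      (Set.mapsTo_univ (id : ℝ → ℝ) (Set.Icc (0:ℝ) 1))
    rw [seg_eq_smul]
    calc eVariationOn (fun s : ℝ => s • segv t) (Set.Icc 0 1)
        = eVariationOn ((fun s : ℝ => s • segv t) ∘ id) (Set.Icc 0 1) := by rw [Function.comp_id]
      _ ≤ (‖segv t‖₊ : ENNReal) * eVariationOn (id : ℝ → ℝ) (Set.Icc 0 1) := hcomp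
      _ ≤ (‖segv t‖₊ : ENNReal) * ENNReal.ofReal 1 := by
          exact mul_le_mul_right hid _
      _ = ENNReal.ofReal t := by
          rw [ENNReal.ofReal_one, mul_one, ← enorm_eq_nnnorm, ← ofReal_norm, segv_norm ht0]
  · have h01 : (0:ℝ) ∈ Set.Icc (0:ℝ) 1 := Set.left_mem_Icc.2 (by norm_num)
    have h11 : (1:ℝ) ∈ Set.Icc (0:ℝ) 1 := Set.right_mem_Icc.2 (by norm_num)
    have := eVariationOn.edist_le (seg t) h01 h11
    have hseg0 : seg t 0 = 0 := by rw [seg_eq_smul]; simp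
    have hseg1 : seg t 1 = segv t := by rw [seg_eq_smul]; simp
    rw [hseg0, hseg1, edist_dist, dist_zero_left, segv_norm ht0] at this
    exact this

end segment


end aux

/-- `d = wdist` is a metric on the plane, the identity map from the Euclidean
plane to `(ℝ², d)` is a homeomorphism, and for `t ∈ (0,1]` the segment `γ_t` from
`(0,0)` to `(t,0)` has `d`-length `t²/2` while its Euclidean length is `t`. -/
theorem weighted_metric_example :
    (∀ x y : Plane, wdist x y = 0 ↔ x = y) ∧
    (∀ x y : Plane, wdist x y = wdist y x) ∧
    (∀ x y z : Plane, wdist x z ≤ wdist x y + wdist y z) ∧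
    (∀ x : Plane, ∀ ε : ℝ, 0 < ε →
      ∃ δ : ℝ, 0 < δ ∧ ∀ y : Plane,
        (dist x y < δ → wdist x y < ε) ∧ (wdist x y < δ → dist x y < ε)) ∧
    (∀ t : ℝ, t ∈ Set.Ioc (0:ℝ) 1 →
      wlen (seg t) = t ^ 2 / 2 ∧
      eVariationOn (seg t) (Set.Icc 0 1) = ENNReal.ofReal t) := by
  exact ⟨wdist_eq_zero_iff, wdist_symm, wdist_triangle, homeo_part,
    fun t ht => ⟨seg_wlen ht, seg_evar ht⟩⟩
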